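/- Let β > 0 and let V be a bounded lower semicontinuous viscosity supersolution of the discounted HJBQVI. Set c = max{ (‖f_β‖_∞ + 1)/β, ‖g_β‖_∞ + 1 }, K₀ = −sup_{t,x,z} K(t,x,z) > 0, ξ = min{1, K₀}, and for 0 < λ < 1 define V_λ = (1 − λ)V + λc. Then: (a) for every test function φ once continuously differentiable in t and twice continuously differentiable in x on Ω̄ and every (t,x) ∈ [0,T) × ℝ at which V_λ − φ attains a local minimum, F_β((t,x), V_λ(t,x), (φ_t(t,x), φ_x(t,x)), φ_{xx}(t,x), M_β V_λ(t,x)) ≥ λξ; and (b) for every x ∈ ℝ, min{ V_λ(T,x) − g_β(x), V_λ(T,x) − M_β V_λ(T,x) } ≥ λξ. In other words, V_λ is a strict supersolution of the discounted HJBQVI with margin λξ. -/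

import Mathlib

open Filter Topology Set TopologicalSpace

noncomputable section

/-- The closed parabolic domain `Ω̄ = [0,T] × ℝ`. -/
def Omb (T : ℝ) : Set (ℝ × ℝ) := Set.Icc 0 T ×ˢ (Set.univ : Set ℝ)

/-- The (undiscounted) intervention operator applied to a payoff. -/
def Mop {Y : Type*} [MetricSpace Y] (Z : ℝ × ℝ → NonemptyCompacts Y)
    (Γ K : ℝ → ℝ → Y → ℝ) (V : ℝ × ℝ → ℝ) (p : ℝ × ℝ) : ℝ :=
  sSup ((fun z => V (p.1, Γ p.1 p.2 z) + K p.1 p.2 z) '' (Z p : Set Y))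

/-- The discounted intervention operator
`M_β V(t,x) = sup_{z ∈ Z(t,x)} { V(t, Γ(t,x,z)) + e^{βt} K(t,x,z) }`. -/
def MopB {Y : Type*} [MetricSpace Y] (β : ℝ) (Z : ℝ × ℝ → NonemptyCompacts Y)
    (Γ K : ℝ → ℝ → Y → ℝ) (V : ℝ × ℝ → ℝ) (p : ℝ × ℝ) : ℝ :=
  Mop Z Γ (fun t x z => Real.exp (β * t) * K t x z) V p

/-- The discounted HJBQVI operator `F_β((t,x), r, (q,p), A, ℓ)`. -/
def Fb (T β : ℝ) {W : Type*} (a b : ℝ → W → ℝ) (f : ℝ → ℝ → W → ℝ) (g : ℝ → ℝ) :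
    (ℝ × ℝ) × ℝ × (ℝ × ℝ) × ℝ × ℝ → ℝ
  | ((t, x), r, (q, p), A, l) =>
    if t < T then
      min (-q + β * r -
          ⨆ w, (((1 : ℝ) / 2) * b x w ^ 2 * A + a x w * p + Real.exp (β * t) * f t x w))
        (r - l)
    else min (r - Real.exp (β * T) * g x) (r - l)

/-- Upper semicontinuous envelope relative to the domain. -/
def upEnv (T : ℝ) (F : (ℝ × ℝ) × ℝ × (ℝ × ℝ) × ℝ × ℝ → ℝ)
    (ξ : (ℝ × ℝ) × ℝ × (ℝ × ℝ) × ℝ × ℝ) : ℝ :=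
  limsup F (𝓝[{η : (ℝ × ℝ) × ℝ × (ℝ × ℝ) × ℝ × ℝ | η.1 ∈ Omb T}] ξ)

/-- Test functions: once continuously differentiable in `t`, twice in `x`. -/
def C12 (φ φt φx φxx : ℝ × ℝ → ℝ) : Prop :=
  Continuous φ ∧ Continuous φt ∧ Continuous φx ∧ Continuous φxx ∧
    (∀ p : ℝ × ℝ, HasDerivAt (fun t => φ (t, p.2)) (φt p) p.1) ∧
    (∀ p : ℝ × ℝ, HasDerivAt (fun x => φ (p.1, x)) (φx p) p.2) ∧
    (∀ p : ℝ × ℝ, HasDerivAt (fun x => φx (p.1, x)) (φxx p) p.2)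

/-- Viscosity supersolution of the discounted HJBQVI. -/
def IsSupersolB (T β : ℝ) {W Y : Type*} [MetricSpace Y]
    (a b : ℝ → W → ℝ) (f : ℝ → ℝ → W → ℝ) (g : ℝ → ℝ)
    (Z : ℝ × ℝ → NonemptyCompacts Y) (Γ K : ℝ → ℝ → Y → ℝ)
    (V : ℝ × ℝ → ℝ) : Prop :=
  ∀ φ φt φx φxx : ℝ × ℝ → ℝ, C12 φ φt φx φxx → ∀ p ∈ Omb T,
    IsLocalMinOn (fun q => V q - φ q) (Omb T) p →
    0 ≤ upEnv T (Fb T β a b f g) (p, V p, (φt p, φx p), φxx p, MopB β Z Γ K V p)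

/-!
At an interior point, `V_λ - φ` has a local minimum exactly where `V - ψ` does, for
`ψ = (φ - λc)/(1 - λ)`. The Hamiltonian is a supremum of functions affine in `(A, p)` sharing
the term `f_β`, so `H(φ) ≤ (1 - λ) H(ψ) + λ ‖f_β‖`, and `βc ≥ ‖f_β‖ + 1` leaves the margin `λ`;
the intervention obstacle gains `λ (-sup K)` because `e^{βt} K ≤ sup K`.

At the terminal time, the relaxed condition hidden in `(F_β)^*` is upgraded to
`V(T,x₀) ≥ g_β(x₀)` and `V(T,x₀) ≥ M_β V(T,x₀)` by testing `V` against
`φ_n = n² t - n (x - x₀)²`: minimisers of `V - φ_n` converge to `(T, x₀)`, the time derivative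
`n²` makes the interior branch of the envelope negative, so the terminal branch holds there, and
one passes to the limit using continuity of `g` and lower semicontinuity of `M_β V`, which comes
from the Hausdorff continuity of `Z`.
-/

lemma Filter.limsup_ite_le_max {α : Type*} {l : Filter α} [l.NeBot] {P : α → Prop}
    [DecidablePred P] {u v : α → ℝ} {m n : ℝ} (hu : Tendsto u l (𝓝 m))
    (hv : Tendsto v l (𝓝 n)) :
    limsup (fun x => if P x then u x else v x) l ≤ max m n := by
  have hmax : Tendsto (fun x => max (u x) (v x)) l (𝓝 (max m n)) := hu.max hv
  have hlow : IsBoundedUnder (· ≥ ·) l fun x => if P x then u x else v x :=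
    (hu.min hv).isBoundedUnder_ge.mono_ge <| Eventually.of_forall fun x => by
      dsimp only
      split_ifs
      exacts [min_le_left _ _, min_le_right _ _]
  rw [← hmax.limsup_eq]
  refine limsup_le_limsup (Eventually.of_forall fun x => ?_) hlow.isCoboundedUnder_le
    hmax.isBoundedUnder_le
  dsimp only
  split_ifs
  exacts [le_max_left _ _, le_max_right _ _]

lemma Filter.limsup_ite_of_eventually {α : Type*} {l : Filter α} [l.NeBot] {P : α → Prop}
    [DecidablePred P] {u v : α → ℝ} {m : ℝ} (hP : ∀ᶠ x in l, P x) (hu : Tendsto u l (𝓝 m)) :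
    limsup (fun x => if P x then u x else v x) l = m := by
  rw [limsup_congr (hP.mono fun x hx => if_pos hx)]
  exact hu.limsup_eq

lemma IsLocalMinOn.inv_mul_sub {α : Type*} [TopologicalSpace α] {V φ : α → ℝ} {S : Set α}
    {p : α} {s c : ℝ} (hs : 0 < s) (h : IsLocalMinOn (fun q => s * V q + c - φ q) S p) :
    IsLocalMinOn (fun q => V q - s⁻¹ * (φ q - c)) S p := by
  have hrescale : ∀ q, V q - s⁻¹ * (φ q - c) = s⁻¹ * (s * V q + c - φ q) := fun q => by
    field_simp
    ring
  simp only [hrescale]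
  exact h.comp_mono fun _ _ h => mul_le_mul_of_nonneg_left h (inv_nonneg.2 hs.le)

lemma tendsto_of_penalty_le {p : ℕ → ℝ × ℝ} {t₀ x₀ C : ℝ} (hle : ∀ n, (p n).1 ≤ t₀)
    (hpen : ∀ n : ℕ, ((n : ℝ) + 1) * ((p n).2 - x₀) ^ 2 + ((n : ℝ) + 1) ^ 2 * (t₀ - (p n).1) ≤ C) :
    Tendsto p atTop (𝓝 (t₀, x₀)) := by
  have hrate : Tendsto (fun n : ℕ => C * (1 / ((n : ℝ) + 1))) atTop (𝓝 0) := by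
    simpa using tendsto_one_div_add_atTop_nhds_zero_nat.const_mul C
  have hterms : ∀ n : ℕ, ((p n).2 - x₀) ^ 2 ≤ C * (1 / ((n : ℝ) + 1)) ∧
      t₀ - (p n).1 ≤ C * (1 / ((n : ℝ) + 1)) := by
    intro n
    have hn : (1 : ℝ) ≤ n + 1 := le_add_of_nonneg_left n.cast_nonneg
    have ht : 0 ≤ t₀ - (p n).1 := sub_nonneg.2 (hle n)
    rw [mul_one_div, le_div_iff₀ (by linarith), le_div_iff₀ (by linarith)]
    have hsq := sq_nonneg ((p n).2 - x₀)
    constructor <;> nlinarith [hpen n, mul_le_mul_of_nonneg_right hn ht]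
  have ht : Tendsto (fun n => (p n).1) atTop (𝓝 t₀) := by
    refine tendsto_iff_dist_tendsto_zero.2 (squeeze_zero (fun _ => dist_nonneg) (fun n => ?_) hrate)
    rw [Real.dist_eq, abs_of_nonpos (sub_nonpos.2 (hle n)), neg_sub]
    exact (hterms n).2
  have hx : Tendsto (fun n => (p n).2) atTop (𝓝 x₀) := by
    have hsq : Tendsto (fun n => ((p n).2 - x₀) ^ 2) atTop (𝓝 0) :=
      squeeze_zero (fun _ => sq_nonneg _) (fun n => (hterms n).1) hrate
    refine tendsto_iff_dist_tendsto_zero.2 ?_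
    simpa [Real.dist_eq, Real.sqrt_sq_eq_abs] using hsq.sqrt
  exact ht.prodMk_nhds hx

def ham (β : ℝ) {W : Type*} (a b : ℝ → W → ℝ) (f : ℝ → ℝ → W → ℝ) (t x A p : ℝ) : ℝ :=
  ⨆ w, ((1 : ℝ) / 2 * b x w ^ 2 * A + a x w * p + Real.exp (β * t) * f t x w)

section Hamiltonian

variable {T : ℝ} (β : ℝ) {W : Type*} [TopologicalSpace W] {a b : ℝ → W → ℝ} {f : ℝ → ℝ → W → ℝ}

lemma continuousOn_ham_integrand
    (hfc : ContinuousOn (fun p : ℝ × ℝ × W => f p.1 p.2.1 p.2.2)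
      {p : ℝ × ℝ × W | p.1 ∈ Icc 0 T})
    (hac : Continuous fun p : ℝ × W => a p.1 p.2)
    (hbc : Continuous fun p : ℝ × W => b p.1 p.2) :
    ContinuousOn (fun q : (ℝ × ℝ × ℝ × ℝ) × W =>
        (1 : ℝ) / 2 * b q.1.2.1 q.2 ^ 2 * q.1.2.2.1 + a q.1.2.1 q.2 * q.1.2.2.2
          + Real.exp (β * q.1.1) * f q.1.1 q.1.2.1 q.2)
      {q | q.1.1 ∈ Icc 0 T} := by
  have hx : Continuous fun q : (ℝ × ℝ × ℝ × ℝ) × W => (q.1.2.1, q.2) := by fun_prop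
  have hb : Continuous fun q : (ℝ × ℝ × ℝ × ℝ) × W => b q.1.2.1 q.2 := hbc.comp hx
  have ha : Continuous fun q : (ℝ × ℝ × ℝ × ℝ) × W => a q.1.2.1 q.2 := hac.comp hx
  have hf : ContinuousOn (fun q : (ℝ × ℝ × ℝ × ℝ) × W => f q.1.1 q.1.2.1 q.2)
      {q | q.1.1 ∈ Icc 0 T} :=
    hfc.comp (Continuous.continuousOn (by fun_prop :
      Continuous fun q : (ℝ × ℝ × ℝ × ℝ) × W => (q.1.1, q.1.2.1, q.2))) fun _ hq => hq
  exact (((continuous_const.mul (hb.pow 2)).mul (by fun_prop)).add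
    (ha.mul (by fun_prop))).continuousOn.add ((by fun_prop : Continuous _).continuousOn.mul hf)

variable [CompactSpace W]

lemma continuousOn_ham
    (hfc : ContinuousOn (fun p : ℝ × ℝ × W => f p.1 p.2.1 p.2.2)
      {p : ℝ × ℝ × W | p.1 ∈ Icc 0 T})
    (hac : Continuous fun p : ℝ × W => a p.1 p.2)
    (hbc : Continuous fun p : ℝ × W => b p.1 p.2) :
    ContinuousOn (fun y : ℝ × ℝ × ℝ × ℝ => ham β a b f y.1 y.2.1 y.2.2.1 y.2.2.2)
      {y | y.1 ∈ Icc 0 T} := by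
  rw [continuousOn_iff_continuous_domRestrict]
  have h := isCompact_univ.continuous_sSup (f := fun (y : {y : ℝ × ℝ × ℝ × ℝ // y.1 ∈ Icc 0 T})
      (w : W) => (1 : ℝ) / 2 * b y.1.2.1 w ^ 2 * y.1.2.2.1 + a y.1.2.1 w * y.1.2.2.2
        + Real.exp (β * y.1.1) * f y.1.1 y.1.2.1 w)
    ((continuousOn_ham_integrand β hfc hac hbc).comp_continuous
      (continuous_subtype_val.prodMap continuous_id) fun q => q.1.2)
  simp only [image_univ, sSup_range] at h
  exact h

lemma le_ham
    (hfc : ContinuousOn (fun p : ℝ × ℝ × W => f p.1 p.2.1 p.2.2)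
      {p : ℝ × ℝ × W | p.1 ∈ Icc 0 T})
    (hac : Continuous fun p : ℝ × W => a p.1 p.2)
    (hbc : Continuous fun p : ℝ × W => b p.1 p.2)
    {t : ℝ} (ht : t ∈ Icc 0 T) (x A p : ℝ) (w : W) :
    (1 : ℝ) / 2 * b x w ^ 2 * A + a x w * p + Real.exp (β * t) * f t x w ≤
      ham β a b f t x A p := by
  have hcont : Continuous fun w : W =>
      (1 : ℝ) / 2 * b x w ^ 2 * A + a x w * p + Real.exp (β * t) * f t x w :=
    (continuousOn_ham_integrand β hfc hac hbc).comp_continuous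
      (Continuous.prodMk_right ((t, x, A, p) : ℝ × ℝ × ℝ × ℝ)) fun _ => ht
  exact le_ciSup (isCompact_range hcont).bddAbove w

lemma ham_le_mul_ham_inv_mul_add [Nonempty W]
    (hfc : ContinuousOn (fun p : ℝ × ℝ × W => f p.1 p.2.1 p.2.2)
      {p : ℝ × ℝ × W | p.1 ∈ Icc 0 T})
    (hac : Continuous fun p : ℝ × W => a p.1 p.2)
    (hbc : Continuous fun p : ℝ × W => b p.1 p.2)
    {t : ℝ} (ht : t ∈ Icc 0 T) (x A p : ℝ) {Cf s : ℝ} (hs0 : 0 < s) (hs1 : s ≤ 1)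
    (hCf : ∀ w, Real.exp (β * t) * f t x w ≤ Cf) :
    ham β a b f t x A p ≤ s * ham β a b f t x (s⁻¹ * A) (s⁻¹ * p) + (1 - s) * Cf := by
  refine ciSup_le fun w => ?_
  have hle := le_ham β hfc hac hbc ht x (s⁻¹ * A) (s⁻¹ * p) w
  have hsplit : (1 : ℝ) / 2 * b x w ^ 2 * A + a x w * p + Real.exp (β * t) * f t x w
      = s * ((1 : ℝ) / 2 * b x w ^ 2 * (s⁻¹ * A) + a x w * (s⁻¹ * p)
          + Real.exp (β * t) * f t x w) + (1 - s) * (Real.exp (β * t) * f t x w) := by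
    field_simp
    ring
  rw [hsplit]
  have := mul_le_mul_of_nonneg_left hle hs0.le
  have := mul_le_mul_of_nonneg_left (hCf w) (sub_nonneg.2 hs1)
  linarith

end Hamiltonian

lemma Fb_eq_ite (T β : ℝ) {W : Type*} (a b : ℝ → W → ℝ) (f : ℝ → ℝ → W → ℝ) (g : ℝ → ℝ) :
    Fb T β a b f g = fun η =>
    if η.1.1 < T then
      min (-η.2.2.1.1 + β * η.2.1 - ham β a b f η.1.1 η.1.2 η.2.2.2.1 η.2.2.1.2)
        (η.2.1 - η.2.2.2.2)
    else min (η.2.1 - Real.exp (β * T) * g η.1.2) (η.2.1 - η.2.2.2.2) :=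
  rfl

section UpperEnvelope

variable {T : ℝ} (β : ℝ) {W : Type*} [TopologicalSpace W] [CompactSpace W]
  {a b : ℝ → W → ℝ} {f : ℝ → ℝ → W → ℝ}

lemma tendsto_Fb_interior_branch
    (hfc : ContinuousOn (fun p : ℝ × ℝ × W => f p.1 p.2.1 p.2.2)
      {p : ℝ × ℝ × W | p.1 ∈ Icc 0 T})
    (hac : Continuous fun p : ℝ × W => a p.1 p.2)
    (hbc : Continuous fun p : ℝ × W => b p.1 p.2)
    {t x r q p A l : ℝ} (ht : t ∈ Icc 0 T) :
    Tendsto (fun η : (ℝ × ℝ) × ℝ × (ℝ × ℝ) × ℝ × ℝ =>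
        min (-η.2.2.1.1 + β * η.2.1 - ham β a b f η.1.1 η.1.2 η.2.2.2.1 η.2.2.1.2)
          (η.2.1 - η.2.2.2.2))
      (𝓝[{η | η.1 ∈ Omb T}] ((t, x), r, (q, p), A, l))
      (𝓝 (min (-q + β * r - ham β a b f t x A p) (r - l))) := by
  have hproj : Continuous fun η : (ℝ × ℝ) × ℝ × (ℝ × ℝ) × ℝ × ℝ =>
      ((η.1.1, η.1.2, η.2.2.2.1, η.2.2.1.2) : ℝ × ℝ × ℝ × ℝ) := by
    fun_prop
  have hham : ContinuousWithinAt
      (fun η : (ℝ × ℝ) × ℝ × (ℝ × ℝ) × ℝ × ℝ =>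
        ham β a b f η.1.1 η.1.2 η.2.2.2.1 η.2.2.1.2)
      {η | η.1 ∈ Omb T} ((t, x), r, (q, p), A, l) :=
    ContinuousWithinAt.comp (g := fun y : ℝ × ℝ × ℝ × ℝ => ham β a b f y.1 y.2.1 y.2.2.1 y.2.2.2)
      (f := fun η : (ℝ × ℝ) × ℝ × (ℝ × ℝ) × ℝ × ℝ => (η.1.1, η.1.2, η.2.2.2.1, η.2.2.1.2))
      (continuousOn_ham β hfc hac hbc (t, x, A, p) ht) hproj.continuousWithinAt
      fun _ hη => hη.1
  have hlin : Continuous fun η : (ℝ × ℝ) × ℝ × (ℝ × ℝ) × ℝ × ℝ => -η.2.2.1.1 + β * η.2.1 := by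
    fun_prop
  have hobst : Continuous fun η : (ℝ × ℝ) × ℝ × (ℝ × ℝ) × ℝ × ℝ => η.2.1 - η.2.2.2.2 := by
    fun_prop
  exact (((hlin.tendsto _).mono_left nhdsWithin_le_nhds).sub hham).min
    ((hobst.tendsto _).mono_left nhdsWithin_le_nhds)

lemma upEnv_Fb_le_max {g : ℝ → ℝ} (hgc : Continuous g)
    (hfc : ContinuousOn (fun p : ℝ × ℝ × W => f p.1 p.2.1 p.2.2)
      {p : ℝ × ℝ × W | p.1 ∈ Icc 0 T})
    (hac : Continuous fun p : ℝ × W => a p.1 p.2)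
    (hbc : Continuous fun p : ℝ × W => b p.1 p.2)
    {t x r q p A l : ℝ} (ht : t ∈ Icc 0 T) :
    upEnv T (Fb T β a b f g) ((t, x), r, (q, p), A, l) ≤
      max (min (-q + β * r - ham β a b f t x A p) (r - l))
        (min (r - Real.exp (β * T) * g x) (r - l)) := by
  have : (𝓝[{η : (ℝ × ℝ) × ℝ × (ℝ × ℝ) × ℝ × ℝ | η.1 ∈ Omb T}]
      ((t, x), r, (q, p), A, l)).NeBot :=
    mem_closure_iff_nhdsWithin_neBot.mp (subset_closure ⟨ht, mem_univ x⟩)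
  have hterm : Continuous fun η : (ℝ × ℝ) × ℝ × (ℝ × ℝ) × ℝ × ℝ =>
      min (η.2.1 - Real.exp (β * T) * g η.1.2) (η.2.1 - η.2.2.2.2) := by
    fun_prop
  rw [upEnv, Fb_eq_ite]
  exact limsup_ite_le_max (tendsto_Fb_interior_branch β hfc hac hbc ht)
    ((hterm.tendsto _).mono_left nhdsWithin_le_nhds)

lemma upEnv_Fb_of_lt (g : ℝ → ℝ)
    (hfc : ContinuousOn (fun p : ℝ × ℝ × W => f p.1 p.2.1 p.2.2)
      {p : ℝ × ℝ × W | p.1 ∈ Icc 0 T})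
    (hac : Continuous fun p : ℝ × W => a p.1 p.2)
    (hbc : Continuous fun p : ℝ × W => b p.1 p.2)
    {t x r q p A l : ℝ} (ht : t ∈ Icc 0 T) (htT : t < T) :
    upEnv T (Fb T β a b f g) ((t, x), r, (q, p), A, l) =
      min (-q + β * r - ham β a b f t x A p) (r - l) := by
  have : (𝓝[{η : (ℝ × ℝ) × ℝ × (ℝ × ℝ) × ℝ × ℝ | η.1 ∈ Omb T}]
      ((t, x), r, (q, p), A, l)).NeBot :=
    mem_closure_iff_nhdsWithin_neBot.mp (subset_closure ⟨ht, mem_univ x⟩)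
  have hlt : ∀ᶠ η in 𝓝[{η : (ℝ × ℝ) × ℝ × (ℝ × ℝ) × ℝ × ℝ | η.1 ∈ Omb T}]
      ((t, x), r, (q, p), A, l), η.1.1 < T :=
    ((continuous_fst.fst.tendsto _).mono_left nhdsWithin_le_nhds).eventually_lt_const htT
  rw [upEnv, Fb_eq_ite]
  exact limsup_ite_of_eventually hlt (tendsto_Fb_interior_branch β hfc hac hbc ht)

end UpperEnvelope

section Intervention

variable {Y : Type*} [MetricSpace Y] {T β : ℝ} {Z : ℝ × ℝ → NonemptyCompacts Y}
  {Γ K : ℝ → ℝ → Y → ℝ} {V : ℝ × ℝ → ℝ} {p : ℝ × ℝ}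

lemma MopB_le {B : ℝ}
    (h : ∀ z ∈ Z p, V (p.1, Γ p.1 p.2 z) + Real.exp (β * p.1) * K p.1 p.2 z ≤ B) :
    MopB β Z Γ K V p ≤ B :=
  csSup_le ((Z p).nonempty.image _) (forall_mem_image.2 h)

lemma le_MopB {C : ℝ} (hV : ∀ q ∈ Omb T, V q ≤ C)
    (hK : ∀ t ∈ Icc 0 T, ∀ x z, K t x z ≤ 0) (hp : p ∈ Omb T) {z : Y} (hz : z ∈ Z p) :
    V (p.1, Γ p.1 p.2 z) + Real.exp (β * p.1) * K p.1 p.2 z ≤ MopB β Z Γ K V p := by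
  refine le_csSup ⟨C, forall_mem_image.2 fun z _ => ?_⟩ (mem_image_of_mem _ hz)
  have hVz := hV (p.1, Γ p.1 p.2 z) ⟨hp.1, mem_univ _⟩
  have hKz := mul_nonpos_of_nonneg_of_nonpos (Real.exp_pos (β * p.1)).le (hK p.1 hp.1 p.2 z)
  linarith

lemma neg_mul_le_sub_MopB_affine (hβ : 0 ≤ β) {C Ksup lam c : ℝ} (hV : ∀ q ∈ Omb T, V q ≤ C)
    (hKs : ∀ t ∈ Icc 0 T, ∀ x z, K t x z ≤ Ksup) (hKsneg : Ksup ≤ 0) (hp : p ∈ Omb T)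
    (hlam0 : 0 ≤ lam) (hlam1 : lam ≤ 1) (hM : MopB β Z Γ K V p ≤ V p) :
    lam * -Ksup ≤
      (1 - lam) * V p + lam * c - MopB β Z Γ K (fun q => (1 - lam) * V q + lam * c) p := by
  suffices MopB β Z Γ K (fun q => (1 - lam) * V q + lam * c) p ≤
      (1 - lam) * MopB β Z Γ K V p + lam * (c + Ksup) by nlinarith
  refine MopB_le fun z hz => ?_
  have hle := le_MopB (β := β) (Γ := Γ) hV (fun t ht x z => (hKs t ht x z).trans hKsneg) hp hz
  -- `e^{βt} ≥ 1` and `K ≤ 0` give `e^{βt} K ≤ K`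
  have hexpK : Real.exp (β * p.1) * K p.1 p.2 z ≤ Ksup := by
    have h1 : 1 ≤ Real.exp (β * p.1) := Real.one_le_exp (mul_nonneg hβ hp.1.1)
    nlinarith [hKs p.1 hp.1 p.2 z]
  nlinarith

lemma lowerSemicontinuousWithinAt_MopB (hZ : ContinuousOn Z (Omb T))
    (hΓ : ContinuousOn (fun p : ℝ × ℝ × Y => Γ p.1 p.2.1 p.2.2)
      {p : ℝ × ℝ × Y | p.1 ∈ Icc 0 T})
    (hK : ContinuousOn (fun p : ℝ × ℝ × Y => K p.1 p.2.1 p.2.2)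
      {p : ℝ × ℝ × Y | p.1 ∈ Icc 0 T})
    (hKneg : ∀ t ∈ Icc 0 T, ∀ x z, K t x z ≤ 0) {C : ℝ} (hV : ∀ q ∈ Omb T, V q ≤ C)
    (hVlsc : LowerSemicontinuousOn V (Omb T)) (hp : p ∈ Omb T) :
    LowerSemicontinuousWithinAt (MopB β Z Γ K V) (Omb T) p := by
  intro y hy
  obtain ⟨_, ⟨z, hz, rfl⟩, hyz⟩ := exists_lt_of_lt_csSup ((Z p).nonempty.image _) hy
  -- follow `z` by a nearest point of the moving compact set `Z q`
  choose zq hzq hzqd using fun q => (Z q).isCompact.exists_infEDist_eq_edist (Z q).nonempty z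
  have hzt : Tendsto zq (𝓝[Omb T] p) (𝓝 z) := by
    refine EMetric.tendsto_nhds.2 fun ε hε => ?_
    filter_upwards [EMetric.tendsto_nhds.1 (hZ p hp) ε hε] with q hq
    calc edist (zq q) z = Metric.infEDist z (Z q) := by rw [edist_comm, hzqd]
      _ ≤ Metric.hausdorffEDist (Z p : Set Y) (Z q) :=
        Metric.infEDist_le_hausdorffEDist_of_mem hz
      _ = edist (Z q) (Z p) := Metric.hausdorffEDist_comm
      _ < ε := hq
  have htriple : Tendsto (fun q => (q.1, q.2, zq q)) (𝓝[Omb T] p)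
      (𝓝[{r : ℝ × ℝ × Y | r.1 ∈ Icc 0 T}] (p.1, p.2, z)) :=
    tendsto_nhdsWithin_iff.2 ⟨(tendsto_nhdsWithin_of_tendsto_nhds
      (continuous_fst.tendsto p)).prodMk_nhds ((tendsto_nhdsWithin_of_tendsto_nhds
        (continuous_snd.tendsto p)).prodMk_nhds hzt),
      eventually_mem_nhdsWithin.mono fun q hq => hq.1⟩
  have hjump : Tendsto (fun q => (q.1, Γ q.1 q.2 (zq q))) (𝓝[Omb T] p)
      (𝓝[Omb T] (p.1, Γ p.1 p.2 z)) :=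
    tendsto_nhdsWithin_iff.2 ⟨(tendsto_nhdsWithin_of_tendsto_nhds
      (continuous_fst.tendsto p)).prodMk_nhds ((hΓ _ hp.1).tendsto.comp htriple),
      eventually_mem_nhdsWithin.mono fun q hq => ⟨hq.1, mem_univ _⟩⟩
  have hcost : Tendsto (fun q => Real.exp (β * q.1) * K q.1 q.2 (zq q)) (𝓝[Omb T] p)
      (𝓝 (Real.exp (β * p.1) * K p.1 p.2 z)) :=
    ((Real.continuous_exp.comp (continuous_const.mul continuous_fst)).continuousWithinAt.tendsto
      ).mul ((hK _ hp.1).tendsto.comp htriple)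
  set δ := (V (p.1, Γ p.1 p.2 z) + Real.exp (β * p.1) * K p.1 p.2 z - y) / 2
  have hδ : 0 < δ := by simp only [δ]; linarith
  filter_upwards
    [hjump.eventually (hVlsc (p.1, Γ p.1 p.2 z) ⟨hp.1, mem_univ _⟩ _ (sub_lt_self _ hδ)),
    hcost.eventually_const_lt (sub_lt_self _ hδ), self_mem_nhdsWithin] with q hVq hKq hq
  have := le_MopB (β := β) (Γ := Γ) hV hKneg hq (hzq q)
  simp only [δ] at hVq hKq
  linarith

end Intervention

lemma C12.mul_sub_const {φ φt φx φxx : ℝ × ℝ → ℝ} (h : C12 φ φt φx φxx) (k c : ℝ) :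
    C12 (fun q => k * (φ q - c)) (fun q => k * φt q) (fun q => k * φx q)
      (fun q => k * φxx q) := by
  obtain ⟨hφ, hφt, hφx, hφxx, ht, hx, hxx⟩ := h
  exact ⟨by fun_prop, by fun_prop, by fun_prop, by fun_prop,
    fun q => ((ht q).sub_const c).const_mul k, fun q => ((hx q).sub_const c).const_mul k,
    fun q => (hxx q).const_mul k⟩

lemma C12_penalty (n x₀ : ℝ) :
    C12 (fun q => n ^ 2 * q.1 - n * (q.2 - x₀) ^ 2) (fun _ => n ^ 2)
      (fun q => -(2 * n) * (q.2 - x₀)) (fun _ => -(2 * n)) := by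
  refine ⟨by fun_prop, continuous_const, by fun_prop, continuous_const, fun q => ?_,
    fun q => ?_, fun q => ?_⟩
  · simpa using ((hasDerivAt_id q.1).const_mul (n ^ 2)).sub_const (n * (q.2 - x₀) ^ 2)
  · refine (((((hasDerivAt_id' q.2).sub_const x₀).pow 2).const_mul n).const_sub
      (n ^ 2 * q.1)).congr_deriv ?_
    push_cast
    ring
  · simpa using ((hasDerivAt_id q.2).sub_const x₀).const_mul (-(2 * n))

/-- Minimising `V - φ` over the compact slab `[0,T] × B̄(x₀, C + 1)`: the comparison with
`(T, x₀)` keeps the minimiser inside the open ball, so it is a local minimiser on `Ω̄`. -/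
lemma exists_isLocalMinOn_penalized {T : ℝ} (hT : 0 ≤ T) {V : ℝ × ℝ → ℝ} {C : ℝ}
    (hV : ∀ p ∈ Omb T, |V p| ≤ C) (hVlsc : LowerSemicontinuousOn V (Omb T)) (x₀ : ℝ)
    {n : ℝ} (hn : 1 ≤ n) :
    ∃ p ∈ Omb T, IsLocalMinOn (fun q => V q - (n ^ 2 * q.1 - n * (q.2 - x₀) ^ 2)) (Omb T) p ∧
      V p + n * (p.2 - x₀) ^ 2 + n ^ 2 * (T - p.1) ≤ V (T, x₀) := by
  have hTx : (T, x₀) ∈ Omb T := ⟨⟨hT, le_rfl⟩, mem_univ _⟩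
  have hC : 0 ≤ C := (abs_nonneg _).trans (hV _ hTx)
  set S := Icc 0 T ×ˢ Metric.closedBall x₀ (C + 1)
  have hSO : S ⊆ Omb T := prod_mono subset_rfl (subset_univ _)
  have hlsc : LowerSemicontinuousOn (fun q => V q - (n ^ 2 * q.1 - n * (q.2 - x₀) ^ 2)) S := by
    have hφ : Continuous fun q : ℝ × ℝ => -(n ^ 2 * q.1 - n * (q.2 - x₀) ^ 2) := by fun_prop
    simpa only [sub_eq_add_neg] using (hVlsc.mono hSO).add
      (hφ.lowerSemicontinuous.lowerSemicontinuousOn S)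
  have hTxS : (T, x₀) ∈ S := ⟨⟨hT, le_rfl⟩, Metric.mem_closedBall_self (by linarith)⟩
  obtain ⟨p, hpS, hpmin⟩ :=
    hlsc.exists_isMinOn ⟨_, hTxS⟩ (isCompact_Icc.prod (isCompact_closedBall x₀ (C + 1)))
  have hest : V p + n * (p.2 - x₀) ^ 2 + n ^ 2 * (T - p.1) ≤ V (T, x₀) := by
    have := hpmin hTxS
    simp only [mem_ofPred_eq, sub_self, ne_eq, OfNat.ofNat_ne_zero, not_false_eq_true,
      zero_pow, mul_zero, sub_zero] at this
    linarith
  refine ⟨p, hSO hpS, ?_, hest⟩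
  have hball : p.2 ∈ Metric.ball x₀ (C + 1) := by
    have hVp := abs_le.1 (hV p (hSO hpS))
    have hVT := abs_le.1 (hV _ hTx)
    have htime : 0 ≤ n ^ 2 * (T - p.1) := mul_nonneg (sq_nonneg n) (sub_nonneg.2 hpS.1.2)
    have hsq : (p.2 - x₀) ^ 2 < (C + 1) ^ 2 := by nlinarith [sq_nonneg (p.2 - x₀)]
    rw [Metric.mem_ball, Real.dist_eq]
    exact abs_lt_of_sq_lt_sq hsq (by linarith)
  have hSnhds : S ∈ 𝓝[Omb T] p :=
    mem_nhdsWithin.2 ⟨Prod.snd ⁻¹' Metric.ball x₀ (C + 1),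
      Metric.isOpen_ball.preimage continuous_snd, hball,
      fun q hq => ⟨hq.2.1, Metric.ball_subset_closedBall hq.1⟩⟩
  exact hpmin.filter_mono (le_principal_iff.2 hSnhds)

lemma exists_penalized_hamiltonian_neg {T : ℝ} (β : ℝ) {W : Type*} [TopologicalSpace W]
    [CompactSpace W] [Nonempty W] {a b : ℝ → W → ℝ} {f : ℝ → ℝ → W → ℝ}
    (hfc : ContinuousOn (fun p : ℝ × ℝ × W => f p.1 p.2.1 p.2.2)
      {p : ℝ × ℝ × W | p.1 ∈ Icc 0 T})
    (hac : Continuous fun p : ℝ × W => a p.1 p.2)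
    (hbc : Continuous fun p : ℝ × W => b p.1 p.2) (x₀ D : ℝ) :
    ∃ N : ℝ, ∀ n ≥ N, ∀ t ∈ Icc 0 T, ∀ x ∈ Metric.closedBall x₀ 1,
      -n ^ 2 + D - ham β a b f t x (-(2 * n)) (-(2 * n) * (x - x₀)) < 0 := by
  obtain ⟨w₀⟩ := ‹Nonempty W›
  have haw : Continuous fun x => a x w₀ := hac.comp (continuous_id.prodMk continuous_const)
  have hbw : Continuous fun x => b x w₀ := hbc.comp (continuous_id.prodMk continuous_const)
  obtain ⟨M₁, hM₁⟩ := (isCompact_closedBall x₀ 1).exists_bound_of_continuousOn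
    (f := fun x => b x w₀ ^ 2 + 2 * a x w₀ * (x - x₀)) (by fun_prop)
  have hfw : ContinuousOn (fun q : ℝ × ℝ => Real.exp (β * q.1) * f q.1 q.2 w₀)
      (Icc 0 T ×ˢ Metric.closedBall x₀ 1) :=
    (by fun_prop : Continuous fun q : ℝ × ℝ => Real.exp (β * q.1)).continuousOn.mul
      (hfc.comp (by fun_prop : Continuous fun q : ℝ × ℝ => (q.1, q.2, w₀)).continuousOn
        fun q hq => hq.1)
  obtain ⟨M₂, hM₂⟩ :=
    (isCompact_Icc.prod (isCompact_closedBall x₀ 1)).exists_bound_of_continuousOn hfw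
  refine ⟨|M₁| + |D| + |M₂| + 1, fun n hn t ht x hx => ?_⟩
  have h₁ := (abs_le.1 (hM₁ x hx)).2
  have h₂ : -M₂ ≤ Real.exp (β * t) * f t x w₀ := (abs_le.1 (hM₂ (t, x) ⟨ht, hx⟩)).1
  have hham := le_ham β hfc hac hbc ht x (-(2 * n)) (-(2 * n) * (x - x₀)) w₀
  have hn1 : 1 ≤ n := le_trans (by linarith [abs_nonneg M₁, abs_nonneg D, abs_nonneg M₂]) hn
  have hlin := mul_le_mul_of_nonneg_left h₁ (by linarith : (0 : ℝ) ≤ n)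
  have hquad := mul_le_mul_of_nonneg_left hn (by linarith : (0 : ℝ) ≤ n)
  have hM₁n := mul_le_mul_of_nonneg_left (le_abs_self M₁) (by linarith : (0 : ℝ) ≤ n)
  have hDn := mul_le_mul_of_nonneg_right hn1 (abs_nonneg D)
  have hM₂n := mul_le_mul_of_nonneg_right hn1 (abs_nonneg M₂)
  nlinarith [le_abs_self D, le_abs_self M₂]

theorem IsSupersolB.terminal_condition {T β : ℝ} (hT : 0 ≤ T) {W : Type*} [TopologicalSpace W]
    [CompactSpace W] [Nonempty W] {Y : Type*} [MetricSpace Y] {Z : ℝ × ℝ → NonemptyCompacts Y}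
    {f : ℝ → ℝ → W → ℝ} {g : ℝ → ℝ} {Γ K : ℝ → ℝ → Y → ℝ} {a b : ℝ → W → ℝ}
    {V : ℝ × ℝ → ℝ} (hsup : IsSupersolB T β a b f g Z Γ K V) (hZ : ContinuousOn Z (Omb T))
    (hfc : ContinuousOn (fun p : ℝ × ℝ × W => f p.1 p.2.1 p.2.2)
      {p : ℝ × ℝ × W | p.1 ∈ Icc 0 T})
    (hgc : Continuous g)
    (hΓ : ContinuousOn (fun p : ℝ × ℝ × Y => Γ p.1 p.2.1 p.2.2)
      {p : ℝ × ℝ × Y | p.1 ∈ Icc 0 T})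
    (hK : ContinuousOn (fun p : ℝ × ℝ × Y => K p.1 p.2.1 p.2.2)
      {p : ℝ × ℝ × Y | p.1 ∈ Icc 0 T})
    (hac : Continuous fun p : ℝ × W => a p.1 p.2)
    (hbc : Continuous fun p : ℝ × W => b p.1 p.2)
    (hKneg : ∀ t ∈ Icc 0 T, ∀ x z, K t x z ≤ 0)
    {C : ℝ} (hV : ∀ p ∈ Omb T, |V p| ≤ C) (hVlsc : LowerSemicontinuousOn V (Omb T)) (x₀ : ℝ) :
    Real.exp (β * T) * g x₀ ≤ V (T, x₀) ∧ MopB β Z Γ K V (T, x₀) ≤ V (T, x₀) := by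
  have hVle : ∀ q ∈ Omb T, V q ≤ C := fun q hq => (abs_le.1 (hV q hq)).2
  have hTx : (T, x₀) ∈ Omb T := ⟨⟨hT, le_rfl⟩, mem_univ _⟩
  choose p hpO hpmin hpen using fun n : ℕ =>
    exists_isLocalMinOn_penalized hT hV hVlsc x₀ (le_add_of_nonneg_left n.cast_nonneg)
  have hpV : ∀ n, V (p n) ≤ V (T, x₀) := fun n => by
    nlinarith [hpen n, sq_nonneg ((p n).2 - x₀), sub_nonneg.2 (hpO n).1.2]
  have hlim : Tendsto p atTop (𝓝 (T, x₀)) :=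
    tendsto_of_penalty_le (C := 2 * C) (fun n => (hpO n).1.2) fun n => by
      linarith [hpen n, abs_le.1 (hV _ (hpO n)), abs_le.1 (hV _ hTx)]
  have hconv : Tendsto p atTop (𝓝[Omb T] (T, x₀)) :=
    tendsto_nhdsWithin_iff.2 ⟨hlim, Eventually.of_forall hpO⟩
  have hxlim : Tendsto (fun n => (p n).2) atTop (𝓝 x₀) := (continuous_snd.tendsto _).comp hlim
  obtain ⟨N, hN⟩ := exists_penalized_hamiltonian_neg β hfc hac hbc x₀ (|β| * C)
  -- for large `n` the interior branch of `F_β` is negative, so the terminal branch holds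
  have hterm : ∀ᶠ n : ℕ in atTop,
      Real.exp (β * T) * g (p n).2 ≤ V (p n) ∧ MopB β Z Γ K V (p n) ≤ V (p n) := by
    filter_upwards [hxlim.eventually (Metric.closedBall_mem_nhds x₀ one_pos),
      tendsto_natCast_atTop_atTop.eventually_ge_atTop N] with n hxn hnN
    have h0 := (hsup _ _ _ _ (C12_penalty ((n : ℝ) + 1) x₀) (p n) (hpO n) (hpmin n)).trans
      (upEnv_Fb_le_max β hgc hfc hac hbc (hpO n).1)
    have hneg := hN ((n : ℝ) + 1) (by linarith) (p n).1 (hpO n).1 (p n).2 hxn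
    have hβV : β * V (p n) ≤ |β| * C :=
      (le_abs_self _).trans ((abs_mul β _).trans_le
        (mul_le_mul_of_nonneg_left (hV _ (hpO n)) (abs_nonneg β)))
    rcases le_max_iff.1 h0 with h | h
    · linarith [h.trans (min_le_left _ _)]
    · exact ⟨by linarith [h.trans (min_le_left _ _)], by linarith [h.trans (min_le_right _ _)]⟩
  refine ⟨le_of_tendsto (((hgc.tendsto x₀).comp hxlim).const_mul _)
    (hterm.mono fun n hn => hn.1.trans (hpV n)), le_of_forall_lt fun y hy => ?_⟩
  obtain ⟨n, hMy, hn⟩ := ((hconv.eventually (lowerSemicontinuousWithinAt_MopB hZ hΓ hK hKneg hVle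
    hVlsc hTx y hy)).and hterm).exists
  exact hMy.trans_le (hn.2.trans (hpV n))

lemma le_sub_ham_affine {T β : ℝ} {W : Type*} [TopologicalSpace W] [CompactSpace W] [Nonempty W]
    {a b : ℝ → W → ℝ} {f : ℝ → ℝ → W → ℝ}
    (hfc : ContinuousOn (fun p : ℝ × ℝ × W => f p.1 p.2.1 p.2.2)
      {p : ℝ × ℝ × W | p.1 ∈ Icc 0 T})
    (hac : Continuous fun p : ℝ × W => a p.1 p.2)
    (hbc : Continuous fun p : ℝ × W => b p.1 p.2)
    {t x r q p A Cf c lam : ℝ} (ht : t ∈ Icc 0 T) (hlam0 : 0 < lam) (hlam1 : lam < 1)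
    (hCf : ∀ w, Real.exp (β * t) * f t x w ≤ Cf) (hc : Cf + 1 ≤ β * c)
    (h : 0 ≤ -((1 - lam)⁻¹ * q) + β * r
      - ham β a b f t x ((1 - lam)⁻¹ * A) ((1 - lam)⁻¹ * p)) :
    lam ≤ -q + β * ((1 - lam) * r + lam * c) - ham β a b f t x A p := by
  have hs : 0 < 1 - lam := by linarith
  have hscale := ham_le_mul_ham_inv_mul_add β hfc hac hbc ht x A p hs (by linarith) hCf
  rw [sub_sub_cancel] at hscale
  have h' := mul_le_mul_of_nonneg_left h hs.le
  rw [mul_sub, mul_add, mul_neg, ← mul_assoc, mul_inv_cancel₀ hs.ne', one_mul, mul_zero] at h'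
  nlinarith

theorem hjbqvi_strict_supersolution_general
    (T : ℝ) (hT : 0 < T) (β : ℝ) (hβ : 0 < β)
    {W : Type*} [MetricSpace W] [CompactSpace W] [Nonempty W]
    {Y : Type*} [MetricSpace Y]
    (Z : ℝ × ℝ → NonemptyCompacts Y) (hZ : ContinuousOn Z (Omb T))
    (f : ℝ → ℝ → W → ℝ)
    (hfc : ContinuousOn (fun p : ℝ × ℝ × W => f p.1 p.2.1 p.2.2)
      {p : ℝ × ℝ × W | p.1 ∈ Set.Icc 0 T})
    (g : ℝ → ℝ) (hgc : Continuous g)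
    (Γ : ℝ → ℝ → Y → ℝ)
    (hΓ : ContinuousOn (fun p : ℝ × ℝ × Y => Γ p.1 p.2.1 p.2.2)
      {p : ℝ × ℝ × Y | p.1 ∈ Set.Icc 0 T})
    (K : ℝ → ℝ → Y → ℝ)
    (hK : ContinuousOn (fun p : ℝ × ℝ × Y => K p.1 p.2.1 p.2.2)
      {p : ℝ × ℝ × Y | p.1 ∈ Set.Icc 0 T})
    (a b : ℝ → W → ℝ)
    (hac : Continuous fun p : ℝ × W => a p.1 p.2)
    (hbc : Continuous fun p : ℝ × W => b p.1 p.2)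
    -- `Cf` bounds `‖f_β‖_∞`, `Cg` bounds `‖g_β‖_∞`, and `Ksup` bounds `sup K < 0`:
    (Cf : ℝ) (hCf : ∀ t ∈ Set.Icc (0 : ℝ) T, ∀ (x : ℝ) (w : W),
      |Real.exp (β * t) * f t x w| ≤ Cf)
    (Cg : ℝ) (hCg : ∀ x : ℝ, |Real.exp (β * T) * g x| ≤ Cg)
    (Ksup : ℝ) (hKs : ∀ t ∈ Set.Icc (0 : ℝ) T, ∀ (x : ℝ) (z : Y), K t x z ≤ Ksup)
    (hKsneg : Ksup < 0)
    (V : ℝ × ℝ → ℝ) (hVb : ∃ C, ∀ p ∈ Omb T, |V p| ≤ C)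
    (hVlsc : LowerSemicontinuousOn V (Omb T))
    (hsup : IsSupersolB T β a b f g Z Γ K V)
    (lam : ℝ) (hlam0 : 0 < lam) (hlam1 : lam < 1) :
    (∀ φ φt φx φxx : ℝ × ℝ → ℝ, C12 φ φt φx φxx →
      ∀ p : ℝ × ℝ, p ∈ Omb T → p.1 < T →
        IsLocalMinOn
          (fun q => ((1 - lam) * V q + lam * max ((Cf + 1) / β) (Cg + 1)) - φ q)
          (Omb T) p →
        lam * min 1 (-Ksup) ≤
          Fb T β a b f g
            (p, (1 - lam) * V p + lam * max ((Cf + 1) / β) (Cg + 1),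
              (φt p, φx p), φxx p,
              MopB β Z Γ K
                (fun q => (1 - lam) * V q + lam * max ((Cf + 1) / β) (Cg + 1)) p)) ∧
    (∀ x : ℝ,
      lam * min 1 (-Ksup) ≤
        min (((1 - lam) * V (T, x) + lam * max ((Cf + 1) / β) (Cg + 1))
              - Real.exp (β * T) * g x)
          (((1 - lam) * V (T, x) + lam * max ((Cf + 1) / β) (Cg + 1))
            - MopB β Z Γ K
                (fun q => (1 - lam) * V q + lam * max ((Cf + 1) / β) (Cg + 1)) (T, x))) := by
  set c := max ((Cf + 1) / β) (Cg + 1)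
  obtain ⟨C, hC⟩ := hVb
  have hVle : ∀ q ∈ Omb T, V q ≤ C := fun q hq => (abs_le.1 (hC q hq)).2
  have hmargin1 : lam * min 1 (-Ksup) ≤ lam := mul_le_of_le_one_right hlam0.le (min_le_left _ _)
  have hmargin2 : lam * min 1 (-Ksup) ≤ lam * -Ksup :=
    mul_le_mul_of_nonneg_left (min_le_right _ _) hlam0.le
  have hintervention := fun p hp (hM : MopB β Z Γ K V p ≤ V p) =>
    neg_mul_le_sub_MopB_affine (c := c) hβ.le hVle hKs hKsneg.le hp hlam0.le hlam1.le hM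
  refine ⟨fun φ φt φx φxx hφ p hp hpT hmin => ?_, fun x => ?_⟩
  · obtain ⟨t, x⟩ := p
    have hcf : Cf + 1 ≤ β * c := (div_le_iff₀' hβ).1 (le_max_left _ _)
    have h0 := (hsup _ _ _ _ (hφ.mul_sub_const (1 - lam)⁻¹ (lam * c)) _ hp
      (hmin.inv_mul_sub (by linarith))).trans_eq (upEnv_Fb_of_lt β g hfc hac hbc hp.1 hpT)
    rw [Fb_eq_ite]
    simp only [if_pos hpT]
    exact le_min (hmargin1.trans (le_sub_ham_affine hfc hac hbc hp.1 hlam0 hlam1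
      (fun w => (abs_le.1 (hCf t hp.1 x w)).2) hcf (le_min_iff.1 h0).1))
      (hmargin2.trans (hintervention _ hp (by linarith [(le_min_iff.1 h0).2])))
  · obtain ⟨hg, hM⟩ := hsup.terminal_condition hT.le hZ hfc hgc hΓ hK hac hbc
      (fun t ht x z => (hKs t ht x z).trans hKsneg.le) hC hVlsc x
    refine le_min ?_ (hmargin2.trans (hintervention _ ⟨⟨hT.le, le_rfl⟩, mem_univ x⟩ hM))
    have hgx := (abs_le.1 (hCg x)).2
    have hcg : Cg + 1 ≤ c := le_max_right _ _
    nlinarith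

/-- Construction of strict supersolutions: if `V` is a bounded lower semicontinuous
supersolution of the discounted HJBQVI, `c = max{(‖f_β‖_∞ + 1)/β, ‖g_β‖_∞ + 1}`,
`K₀ = −sup K > 0`, `ξ = min{1, K₀}` and `V_λ = (1−λ)V + λc` for `0 < λ < 1`, then `V_λ`
is a strict supersolution with margin `λξ`: (a) at every interior local minimum point of
`V_λ − φ` the operator `F_β` evaluates to at least `λξ`, and (b) at the terminal time
`min{ V_λ(T,x) − g_β(x), V_λ(T,x) − M_β V_λ(T,x) } ≥ λξ`. -/
theorem hjbqvi_strict_supersolution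
    (T : ℝ) (hT : 0 < T) (β : ℝ) (hβ : 0 < β)
    {W : Type*} [MetricSpace W] [CompactSpace W] [Nonempty W]
    {Y : Type*} [MetricSpace Y]
    (Z : ℝ × ℝ → NonemptyCompacts Y) (hZ : ContinuousOn Z (Omb T))
    (f : ℝ → ℝ → W → ℝ)
    (hfc : ContinuousOn (fun p : ℝ × ℝ × W => f p.1 p.2.1 p.2.2)
      {p : ℝ × ℝ × W | p.1 ∈ Set.Icc 0 T})
    (g : ℝ → ℝ) (hgc : Continuous g)
    (Γ : ℝ → ℝ → Y → ℝ)
    (hΓ : ContinuousOn (fun p : ℝ × ℝ × Y => Γ p.1 p.2.1 p.2.2)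
      {p : ℝ × ℝ × Y | p.1 ∈ Set.Icc 0 T})
    (K : ℝ → ℝ → Y → ℝ)
    (hK : ContinuousOn (fun p : ℝ × ℝ × Y => K p.1 p.2.1 p.2.2)
      {p : ℝ × ℝ × Y | p.1 ∈ Set.Icc 0 T})
    (a b : ℝ → W → ℝ)
    (hac : Continuous fun p : ℝ × W => a p.1 p.2)
    (hbc : Continuous fun p : ℝ × W => b p.1 p.2)
    (L : ℝ) (hLip : ∀ x x' w, |a x w - a x' w| + |b x w - b x' w| ≤ L * |x - x'|)
    (hMg : ∀ x : ℝ, Mop Z Γ K (fun q => g q.2) (T, x) ≤ g x)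
    -- `Cf` bounds `‖f_β‖_∞`, `Cg` bounds `‖g_β‖_∞`, and `Ksup` bounds `sup K < 0`:
    (Cf : ℝ) (hCf : ∀ t ∈ Set.Icc (0 : ℝ) T, ∀ (x : ℝ) (w : W),
      |Real.exp (β * t) * f t x w| ≤ Cf)
    (Cg : ℝ) (hCg : ∀ x : ℝ, |Real.exp (β * T) * g x| ≤ Cg)
    (Ksup : ℝ) (hKs : ∀ t ∈ Set.Icc (0 : ℝ) T, ∀ (x : ℝ) (z : Y), K t x z ≤ Ksup)
    (hKsneg : Ksup < 0)
    (V : ℝ × ℝ → ℝ) (hVb : ∃ C, ∀ p ∈ Omb T, |V p| ≤ C)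
    (hVlsc : LowerSemicontinuousOn V (Omb T))
    (hsup : IsSupersolB T β a b f g Z Γ K V)
    (lam : ℝ) (hlam0 : 0 < lam) (hlam1 : lam < 1) :
    (∀ φ φt φx φxx : ℝ × ℝ → ℝ, C12 φ φt φx φxx →
      ∀ p : ℝ × ℝ, p ∈ Omb T → p.1 < T →
        IsLocalMinOn
          (fun q => ((1 - lam) * V q + lam * max ((Cf + 1) / β) (Cg + 1)) - φ q)
          (Omb T) p →
        lam * min 1 (-Ksup) ≤
          Fb T β a b f g
            (p, (1 - lam) * V p + lam * max ((Cf + 1) / β) (Cg + 1),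
              (φt p, φx p), φxx p,
              MopB β Z Γ K
                (fun q => (1 - lam) * V q + lam * max ((Cf + 1) / β) (Cg + 1)) p)) ∧
    (∀ x : ℝ,
      lam * min 1 (-Ksup) ≤
        min (((1 - lam) * V (T, x) + lam * max ((Cf + 1) / β) (Cg + 1))
              - Real.exp (β * T) * g x)
          (((1 - lam) * V (T, x) + lam * max ((Cf + 1) / β) (Cg + 1))
            - MopB β Z Γ K
                (fun q => (1 - lam) * V q + lam * max ((Cf + 1) / β) (Cg + 1)) (T, x))) :=
  hjbqvi_strict_supersolution_general T hT β hβ Z hZ f hfc g hgc Γ hΓ K hK a b hac hbc Cf hCf Cg hCg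
    Ksup hKs hKsneg V hVb hVlsc hsup lam hlam0 hlam1
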